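/- arXiv:2601.09860 — 7 statements merged into one kernel-verified Lean document; each statement's English description precedes it below -/
import Mathlib

section
/- Let f be a non-negative submodular function on subsets of a finite set V, let X ⊆ V, and let X₁, X₂, ..., X_k be pairwise disjoint subsets of X. Then ∑_{i=1}^k f(X \ X_i) ≥ (k-1)·f(X). -/
lemma stmt_0_aux {α : Type*} [DecidableEq α] (f : Finset α → ℝ)
    (h_submod : ∀ A B : Finset α, f (A ∪ B) + f (A ∩ B) ≤ f A + f B)
    (S : Finset α) :
    ∀ (k : ℕ) (Xs : Fin k → Finset α), (∀ i, Xs i ⊆ S) →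
      (∀ i j, i ≠ j → Disjoint (Xs i) (Xs j)) →
      (k : ℝ) * f S + f (S \ Finset.univ.biUnion Xs) ≤ (∑ i, f (S \ Xs i)) + f S := by
  intro k
  induction k with
  | zero => intro Xs _ _; simp
  | succ n ih =>
      intro Xs h_sub h_disj
      set Ys : Fin n → Finset α := fun i => Xs i.castSucc with hYs
      have hsubY : ∀ i, Ys i ⊆ S := fun i => h_sub _
      have hdisjY : ∀ i j, i ≠ j → Disjoint (Ys i) (Ys j) := by
        intro i j hij
        exact h_disj _ _ (by simpa [Fin.castSucc_inj] using hij)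
      have hIH := ih Ys hsubY hdisjY
      set U : Finset α := Finset.univ.biUnion Ys with hU
      have hdisjU : Disjoint (Xs (Fin.last n)) U := by
        rw [hU, Finset.disjoint_biUnion_right]
        intro i _
        exact h_disj _ _ (Fin.castSucc_lt_last i).ne'
      have hunion : (S \ Xs (Fin.last n)) ∪ (S \ U) = S := by
        rw [← Finset.sdiff_inter_distrib_right]
        rw [Finset.disjoint_iff_inter_eq_empty.mp hdisjU]
        simp
      have hinter : (S \ Xs (Fin.last n)) ∩ (S \ U) = S \ (Xs (Fin.last n) ∪ U) := by
        ext x; simp; tauto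
      have hsm := h_submod (S \ Xs (Fin.last n)) (S \ U)
      rw [hunion, hinter] at hsm
      have hBU : Finset.univ.biUnion Xs = Xs (Fin.last n) ∪ U := by
        ext x
        simp only [Finset.mem_biUnion, Finset.mem_univ, true_and, Finset.mem_union, hU, hYs]
        constructor
        · rintro ⟨i, hi⟩
          rcases Fin.eq_castSucc_or_eq_last i with ⟨j, rfl⟩ | rfl
          · exact Or.inr ⟨j, hi⟩
          · exact Or.inl hi
        · rintro (h | ⟨j, hj⟩)
          exacts [⟨_, h⟩, ⟨_, hj⟩]
      rw [hBU, Fin.sum_univ_castSucc]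
      push_cast
      linarith

/-- For a non-negative submodular function `f` on subsets of a finite
set, a set `S`, and pairwise disjoint subsets `Xs 1, …, Xs k` of `S`,
`∑ i, f (S \ Xs i) ≥ (k - 1) * f S`. -/
theorem stmt_0 {α : Type*} [DecidableEq α] (f : Finset α → ℝ)
    (h_nonneg : ∀ A : Finset α, 0 ≤ f A)
    (h_submod : ∀ A B : Finset α, f (A ∪ B) + f (A ∩ B) ≤ f A + f B)
    (S : Finset α) (k : ℕ) (Xs : Fin k → Finset α)
    (h_sub : ∀ i, Xs i ⊆ S)
    (h_disj : ∀ i j, i ≠ j → Disjoint (Xs i) (Xs j)) :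
    ((k : ℝ) - 1) * f S ≤ ∑ i, f (S \ Xs i) := by
  have h := stmt_0_aux f h_submod S k Xs h_sub h_disj
  have h0 := h_nonneg (S \ Finset.univ.biUnion Xs)
  nlinarith [h_nonneg S]
end

section
/- Let M be a matroid on ground set V and let Y, Z be independent sets with |Y| = |Z|. Then the bipartite exchange graph on parts Y \ Z and Z \ Y, with an edge between y ∈ Y \ Z and z ∈ Z \ Y whenever (Y \ {y}) ∪ {z} is independent, contains a perfect matching. -/
section Aux

variable {α : Type*} [DecidableEq α] (Ind : Finset α → Prop)

/-- Extend an independent set to one of the same size as another independent set. -/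
lemma stmt2_extend
    (h_aug : ∀ ⦃A B : Finset α⦄, Ind A → Ind B → A.card < B.card →
      ∃ e ∈ B \ A, Ind (insert e A)) :
    ∀ n A D, Ind A → Ind D → A.card ≤ D.card → D.card - A.card = n →
      ∃ T, A ⊆ T ∧ T ⊆ A ∪ D ∧ Ind T ∧ T.card = D.card := by
  intro n
  induction n with
  | zero =>
    intro A D hA _ hle h0
    exact ⟨A, Finset.Subset.refl _, Finset.subset_union_left, hA, by omega⟩
  | succ n ih =>
    intro A D hA hD hle hn
    obtain ⟨e, he, hIe⟩ := h_aug hA hD (by omega)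
    rw [Finset.mem_sdiff] at he
    have hcard : (insert e A).card = A.card + 1 := Finset.card_insert_of_notMem he.2
    obtain ⟨T, h1, h2, h3, h4⟩ := ih (insert e A) D hIe hD (by omega) (by omega)
    refine ⟨T, (Finset.subset_insert e A).trans h1, h2.trans ?_, h3, h4⟩
    intro x hx
    rcases Finset.mem_union.mp hx with hx | hx
    · rcases Finset.mem_insert.mp hx with rfl | hx
      · exact Finset.mem_union_right _ he.1
      · exact Finset.mem_union_left _ hx
    · exact Finset.mem_union_right _ hx

/-- Greedily extend an independent subset of `W` to one maximal in `W`. -/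
lemma stmt2_greedy :
    ∀ n (W A : Finset α), Ind A → A ⊆ W → (W \ A).card ≤ n →
      ∃ B, A ⊆ B ∧ B ⊆ W ∧ Ind B ∧ ∀ z ∈ W, z ∉ B → ¬ Ind (insert z B) := by
  intro n
  induction n with
  | zero =>
    intro W A hA hAW hc
    refine ⟨A, Finset.Subset.refl _, hAW, hA, fun z hzW hzA _ => ?_⟩
    have : z ∈ W \ A := Finset.mem_sdiff.mpr ⟨hzW, hzA⟩
    have := Finset.card_pos.mpr ⟨z, this⟩
    omega
  | succ n ih =>
    intro W A hA hAW hc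
    by_cases h : ∃ z ∈ W, z ∉ A ∧ Ind (insert z A)
    · obtain ⟨z, hzW, hzA, hz⟩ := h
      have hsub : insert z A ⊆ W := Finset.insert_subset hzW hAW
      have hcd : (W \ insert z A).card ≤ n := by
        have h1 : W \ insert z A = (W \ A).erase z := Finset.sdiff_insert W A z
        have h2 : z ∈ W \ A := Finset.mem_sdiff.mpr ⟨hzW, hzA⟩
        have := Finset.card_erase_of_mem h2
        have hpos := Finset.card_pos.mpr ⟨z, h2⟩
        rw [h1, this]
        omega
      obtain ⟨B, h1, h2, h3, h4⟩ := ih W (insert z A) hz hsub hcd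
      exact ⟨B, (Finset.subset_insert z A).trans h1, h2, h3, h4⟩
    · push_neg at h
      exact ⟨A, Finset.Subset.refl _, hAW, hA, h⟩

end Aux

/-- In a matroid (given by its independence family `Ind`), for
independent sets `Y, Z` of equal cardinality, the bipartite exchange graph on
`Y \ Z` and `Z \ Y` (with an edge `(y, z)` whenever `(Y \ {y}) ∪ {z}` is
independent) contains a perfect matching. -/
theorem stmt_2 {α : Type*} [DecidableEq α]
    (Ind : Finset α → Prop)
    (h_empty : Ind ∅)
    (h_down : ∀ ⦃A B : Finset α⦄, A ⊆ B → Ind B → Ind A)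
    (h_aug : ∀ ⦃A B : Finset α⦄, Ind A → Ind B → A.card < B.card →
      ∃ e ∈ B \ A, Ind (insert e A))
    (Y Z : Finset α) (hY : Ind Y) (hZ : Ind Z) (hcard : Y.card = Z.card) :
    ∃ m : α → α, Set.BijOn m ↑(Y \ Z) ↑(Z \ Y) ∧
      ∀ y ∈ Y \ Z, Ind (insert (m y) (Y.erase y)) := by
  classical
  -- Hall condition
  have hall : ∀ S ⊆ Y \ Z, S.card ≤
      ((Z \ Y).filter (fun z => ∃ y ∈ S, Ind (insert z (Y.erase y)))).card := by
    intro S hS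
    rcases S.eq_empty_or_nonempty with rfl | hSne
    · simp
    set N := (Z \ Y).filter (fun z => ∃ y ∈ S, Ind (insert z (Y.erase y))) with hN
    have hSY : S ⊆ Y := hS.trans (Finset.sdiff_subset)
    have hSZ : ∀ x ∈ S, x ∉ Z := fun x hx => (Finset.mem_sdiff.mp (hS hx)).2
    set A := Y \ S with hA
    have hAind : Ind A := h_down (Finset.sdiff_subset) hY
    set W := A ∪ N with hW
    have hAW : A ⊆ W := Finset.subset_union_left
    obtain ⟨B, hAB, hBW, hBind, hBmax⟩ :=
      stmt2_greedy Ind (W \ A).card W A hAind hAW le_rfl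
    -- every augmentation of B from Z is impossible
    have hZB : Z.card ≤ B.card := by
      by_contra hlt
      push_neg at hlt
      obtain ⟨e, he, hIe⟩ := h_aug hBind hZ hlt
      rw [Finset.mem_sdiff] at he
      obtain ⟨heZ, heB⟩ := he
      by_cases heY : e ∈ Y
      · exact heB (hAB (Finset.mem_sdiff.mpr ⟨heY, fun hsS => hSZ e hsS heZ⟩))
      by_cases heN : e ∈ N
      · exact hBmax e (Finset.mem_union_right _ heN) heB hIe
      -- e ∈ Z \ Y, not a neighbor of S : derive contradiction
      have hIeA : Ind (insert e A) :=
        h_down (Finset.insert_subset_insert e hAB) hIe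
      have heA : e ∉ A := fun h => heY (Finset.mem_sdiff.mp h).1
      have hAcard : A.card = Y.card - S.card := Finset.card_sdiff_of_subset hSY
      have hScard : 1 ≤ S.card := Finset.card_pos.mpr hSne
      have hSle : S.card ≤ Y.card := Finset.card_le_card hSY
      have hins : (insert e A).card = A.card + 1 := Finset.card_insert_of_notMem heA
      obtain ⟨T, hT1, hT2, hT3, hT4⟩ := stmt2_extend Ind h_aug
          (Y.card - (insert e A).card) (insert e A) Y hIeA hY (by omega) rfl
      have hTsub : T ⊆ insert e Y := by
        intro x hx
        rcases Finset.mem_union.mp (hT2 hx) with hx' | hx'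
        · rcases Finset.mem_insert.mp hx' with rfl | hx'
          · exact Finset.mem_insert_self _ _
          · exact Finset.mem_insert_of_mem (Finset.sdiff_subset hx')
        · exact Finset.mem_insert_of_mem hx'
      have heT : e ∈ T := hT1 (Finset.mem_insert_self _ _)
      have hcardiY : (insert e Y).card = Y.card + 1 := Finset.card_insert_of_notMem heY
      have hdiff : ((insert e Y) \ T).card = 1 := by
        rw [Finset.card_sdiff_of_subset hTsub]; omega
      obtain ⟨y, hy⟩ := Finset.card_pos.mp (by omega : 0 < ((insert e Y) \ T).card)
      rw [Finset.mem_sdiff] at hy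
      obtain ⟨hyiY, hyT⟩ := hy
      have hyY : y ∈ Y := by
        rcases Finset.mem_insert.mp hyiY with rfl | h
        · exact absurd heT hyT
        · exact h
      have hyS : y ∈ S := by
        by_contra hyS
        exact hyT (hT1 (Finset.mem_insert_of_mem (Finset.mem_sdiff.mpr ⟨hyY, hyS⟩)))
      -- T ⊆ insert e (Y.erase y), and both have card Y.card, so they're equal
      have hTsub2 : T ⊆ insert e (Y.erase y) := by
        intro x hx
        rcases Finset.mem_insert.mp (hTsub hx) with rfl | hx'
        · exact Finset.mem_insert_self _ _
        · exact Finset.mem_insert_of_mem (Finset.mem_erase.mpr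
            ⟨fun h => hyT (h ▸ hx), hx'⟩)
      have hIfinal : Ind (insert e (Y.erase y)) := by
        have hc2 : (insert e (Y.erase y)).card = Y.card := by
          rw [Finset.card_insert_of_notMem (fun h => heY (Finset.erase_subset _ _ h)),
            Finset.card_erase_of_mem hyY]
          have := Finset.card_pos.mpr ⟨y, hyY⟩
          omega
        have : T = insert e (Y.erase y) :=
          Finset.eq_of_subset_of_card_le hTsub2 (by omega)
        exact this ▸ hT3
      exact heN (Finset.mem_filter.mpr ⟨Finset.mem_sdiff.mpr ⟨heZ, heY⟩, y, hyS, hIfinal⟩)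
    have hBle : B.card ≤ W.card := Finset.card_le_card hBW
    have hWle : W.card ≤ A.card + N.card := Finset.card_union_le _ _
    have hAcard : A.card = Y.card - S.card := Finset.card_sdiff_of_subset hSY
    have hSle : S.card ≤ Y.card := Finset.card_le_card hSY
    omega
  -- Apply Hall's marriage theorem
  set t : {x // x ∈ Y \ Z} → Finset α :=
    fun y => (Z \ Y).filter (fun z => Ind (insert z (Y.erase y.1))) with ht
  have hallt : ∀ s : Finset {x // x ∈ Y \ Z}, s.card ≤ (s.biUnion t).card := by
    intro s
    set S := s.image (fun x => x.1) with hSdef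
    have hScard : S.card = s.card := Finset.card_image_of_injective s Subtype.val_injective
    have hSsub : S ⊆ Y \ Z := by
      intro x hx
      obtain ⟨a, _, rfl⟩ := Finset.mem_image.mp hx
      exact a.2
    have key := hall S hSsub
    refine le_trans (by omega) (le_trans key (Finset.card_le_card ?_))
    intro z hz
    rw [Finset.mem_filter] at hz
    obtain ⟨hzZY, y, hyS, hyInd⟩ := hz
    obtain ⟨a, haS, ha⟩ := Finset.mem_image.mp hyS
    exact Finset.mem_biUnion.mpr ⟨a, haS, Finset.mem_filter.mpr ⟨hzZY, ha ▸ hyInd⟩⟩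
  obtain ⟨f, hfinj, hf⟩ := (Finset.all_card_le_biUnion_card_iff_exists_injective t).mp hallt
  refine ⟨fun y => if h : y ∈ Y \ Z then f ⟨y, h⟩ else y, ?_, ?_⟩
  · have hmaps : ∀ y (h : y ∈ Y \ Z), f ⟨y, h⟩ ∈ Z \ Y := by
      intro y h
      exact (Finset.mem_filter.mp (hf ⟨y, h⟩)).1
    have hinj : Set.InjOn (fun y => if h : y ∈ Y \ Z then f ⟨y, h⟩ else y) ↑(Y \ Z) := by
      intro a ha b hb hab
      simp only [Finset.mem_coe] at ha hb
      simp only [dif_pos ha, dif_pos hb] at hab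
      exact Subtype.mk_eq_mk.mp (hfinj hab)
    refine ⟨?_, hinj, ?_⟩
    · intro y hy
      simp only [Finset.mem_coe] at hy ⊢
      simp only [dif_pos hy]
      exact hmaps y hy
    · -- surjectivity via cardinality
      have hc : (Y \ Z).card = (Z \ Y).card := Finset.card_sdiff_comm hcard
      set I := (Y \ Z).image (fun y => if h : y ∈ Y \ Z then f ⟨y, h⟩ else y) with hI
      have hIsub : I ⊆ Z \ Y := by
        intro z hz
        obtain ⟨y, hy, rfl⟩ := Finset.mem_image.mp hz
        simp only [dif_pos hy]
        exact hmaps y hy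
      have hIcard : I.card = (Y \ Z).card := Finset.card_image_of_injOn hinj
      have hIeq : I = Z \ Y := Finset.eq_of_subset_of_card_le hIsub (by omega)
      intro z hz
      simp only [Finset.mem_coe] at hz
      rw [← hIeq] at hz
      obtain ⟨y, hy, hyz⟩ := Finset.mem_image.mp hz
      exact ⟨y, hy, hyz⟩
  · intro y hy
    simp only [dif_pos hy]
    exact (Finset.mem_filter.mp (hf ⟨y, hy⟩)).2
end

section
/- Let M be a matroid on ground set V, let Y be independent, and let Z ⊆ V with |Z| = |Y|. If the bipartite exchange graph between Y \ Z and Z \ Y (with an edge (y, z) whenever (Y \ {y}) ∪ {z} is independent) contains a unique perfect matching, then Z is independent. -/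
section Aux

variable {α : Type*} [DecidableEq α] (Ind : Finset α → Prop)

/-- Any independent subset of `U` extends to a maximal independent subset of `U`. -/
lemma aux_extend_to_maximal {S U : Finset α} (hS : Ind S) (hSU : S ⊆ U) :
    ∃ K, S ⊆ K ∧ K ⊆ U ∧ Ind K ∧ ∀ e ∈ U, e ∉ K → ¬ Ind (insert e K) := by
  classical
  obtain ⟨K, hK, hmax⟩ :=
    (U.powerset.filter (fun K => S ⊆ K ∧ Ind K)).exists_max_image Finset.card
      ⟨S, by simp [hSU, hS]⟩
  simp only [Finset.mem_filter, Finset.mem_powerset] at hK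
  refine ⟨K, hK.2.1, hK.1, hK.2.2, fun e he heK hInd => ?_⟩
  have hmem : insert e K ∈ U.powerset.filter (fun K => S ⊆ K ∧ Ind K) := by
    simp only [Finset.mem_filter, Finset.mem_powerset]
    exact ⟨Finset.insert_subset he hK.1, hK.2.1.trans (Finset.subset_insert _ _), hInd⟩
  have := hmax _ hmem
  rw [Finset.card_insert_of_notMem heK] at this
  omega

/-- Transitivity of spanning: if every element of `S` is spanned by an independent
set `A`, and `x` is spanned by `S`, then `x` is spanned by `A`. -/
lemma aux_span_trans
    (h_down : ∀ ⦃A B : Finset α⦄, A ⊆ B → Ind B → Ind A)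
    (h_aug : ∀ ⦃A B : Finset α⦄, Ind A → Ind B → A.card < B.card →
      ∃ e ∈ B \ A, Ind (insert e A))
    {A S : Finset α} {x : α}
    (hA : Ind A) (hspan : ∀ s ∈ S, s ∈ A ∨ ¬ Ind (insert s A))
    (hS : Ind S) (hxA : x ∉ A) (hxS : x ∉ S) (hxdep : ¬ Ind (insert x S)) :
    ¬ Ind (insert x A) := by
  intro hIxA
  classical
  obtain ⟨K, hSK, hKU, hK, hKmax⟩ :=
    aux_extend_to_maximal Ind hS
      (show S ⊆ insert x (A ∪ S) from
        (Finset.subset_union_right).trans (Finset.subset_insert _ _))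
  -- |K| ≥ |A| + 1, since `insert x A` is independent and K is maximal
  have hxAU : insert x A ⊆ insert x (A ∪ S) :=
    Finset.insert_subset_insert _ Finset.subset_union_left
  have h1 : (insert x A).card ≤ K.card := by
    by_contra hlt
    push_neg at hlt
    obtain ⟨e, he, hIe⟩ := h_aug hK hIxA hlt
    rw [Finset.mem_sdiff] at he
    exact hKmax e (hxAU he.1) he.2 hIe
  -- `K.erase x ⊆ A ∪ S` has card ≤ |A|
  have hKx : K.erase x ⊆ A ∪ S := by
    intro e he
    rw [Finset.mem_erase] at he
    have := hKU he.2
    rw [Finset.mem_insert] at this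
    tauto
  have h2 : (K.erase x).card ≤ A.card := by
    by_contra hlt
    push_neg at hlt
    obtain ⟨e, he, hIe⟩ := h_aug hA (h_down (Finset.erase_subset _ _) hK) hlt
    rw [Finset.mem_sdiff] at he
    have heAS := hKx he.1
    rw [Finset.mem_union] at heAS
    rcases heAS with h | h
    · exact he.2 h
    · rcases hspan e h with h' | h'
      · exact he.2 h'
      · exact h' hIe
  have hxK : x ∈ K := by
    by_contra hxK
    rw [Finset.erase_eq_of_notMem hxK] at h2
    rw [Finset.card_insert_of_notMem hxA] at h1
    omega
  exact hxdep (h_down (Finset.insert_subset hxK hSK) hK)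

/-- If `Z` is dependent, it contains a circuit: a minimal dependent set. -/
lemma aux_exists_circuit {Z : Finset α} (hZ : ¬ Ind Z) :
    ∃ C, C ⊆ Z ∧ ¬ Ind C ∧ ∀ x ∈ C, Ind (C.erase x) := by
  classical
  obtain ⟨C, hC, hmin⟩ :=
    (Z.powerset.filter (fun C => ¬ Ind C)).exists_min_image Finset.card
      ⟨Z, by simp [hZ]⟩
  simp only [Finset.mem_filter, Finset.mem_powerset] at hC
  refine ⟨C, hC.1, hC.2, fun x hx => ?_⟩
  by_contra hdep
  have hmem : C.erase x ∈ Z.powerset.filter (fun C => ¬ Ind C) := by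
    simp only [Finset.mem_filter, Finset.mem_powerset]
    exact ⟨(Finset.erase_subset _ _).trans hC.1, hdep⟩
  have := hmin _ hmem
  have hcard : (C.erase x).card < C.card := Finset.card_erase_lt_of_mem hx
  omega

/-- If the identity is the only "improving" bijection, then every nonempty set `W`
has a source element: an element with no `R`-edge to any other element of `W`. -/
lemma aux_no_cycle {β : Type*} [Finite β] (R : β → β → Prop)
    (h : ∀ σ : β → β, Function.Bijective σ → (∀ z, σ z ≠ z → R z (σ z)) →
      ∀ z, σ z = z)
    (W : Set β) (hW : W.Nonempty) :
    ∃ z₀ ∈ W, ∀ z ∈ W, z ≠ z₀ → ¬ R z₀ z := by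
  classical
  by_contra hcon
  push_neg at hcon
  choose g hg1 hg2 hg3 using hcon
  set f : β → β := fun z => if hz : z ∈ W then g z hz else z with hf
  have hfW : ∀ z ∈ W, f z ∈ W := fun z hz => by simp only [hf, dif_pos hz]; exact hg1 z hz
  have hfne : ∀ z ∈ W, f z ≠ z := fun z hz => by simp only [hf, dif_pos hz]; exact hg2 z hz
  have hfR : ∀ z ∈ W, R z (f z) := fun z hz => by simp only [hf, dif_pos hz]; exact hg3 z hz
  obtain ⟨z₀, hz₀⟩ := hW
  -- find a periodic point
  obtain ⟨i, j, hij, heq⟩ := Finite.exists_ne_map_eq_of_infinite (fun n : ℕ => f^[n] z₀)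
  wlog hlt : i < j generalizing i j
  · exact this j i hij.symm heq.symm (by omega)
  set a := f^[i] z₀ with ha
  have haW : ∀ k, f^[k] z₀ ∈ W := by
    intro k
    induction k with
    | zero => exact hz₀
    | succ n ih => rw [Function.iterate_succ_apply']; exact hfW _ ih
  set n := j - i with hn
  have hnpos : 0 < n := by omega
  have hper : f^[n] a = a := by
    rw [ha, ← Function.iterate_add_apply]
    have : n + i = j := by omega
    rw [this]
    exact heq.symm
  -- the orbit of a
  set O : Set β := Set.range (fun k : ℕ => f^[k] a) with hO
  have haO : a ∈ O := ⟨0, rfl⟩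
  have hOW : O ⊆ W := by
    rintro x ⟨k, rfl⟩
    show f^[k] a ∈ W
    rw [ha, ← Function.iterate_add_apply]
    exact haW _
  have hfO : ∀ x ∈ O, f x ∈ O := by
    rintro x ⟨k, rfl⟩
    exact ⟨k + 1, Function.iterate_succ_apply' f k a⟩
  set σ : β → β := fun x => if x ∈ O then f x else x with hσ
  have hσsurj : Function.Surjective σ := by
    intro x
    by_cases hx : x ∈ O
    · obtain ⟨k, rfl⟩ := hx
      rcases Nat.eq_zero_or_pos k with rfl | hk
      · refine ⟨f^[n - 1] a, ?_⟩
        have hp : f^[n - 1] a ∈ O := ⟨n - 1, rfl⟩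
        simp only [hσ, if_pos hp]
        have h1 := Function.iterate_succ_apply' f (n - 1) a
        have hn1 : n - 1 + 1 = n := by omega
        rw [Nat.succ_eq_add_one, hn1] at h1
        show f (f^[n - 1] a) = f^[0] a
        rw [← h1, hper]
        rfl
      · refine ⟨f^[k - 1] a, ?_⟩
        have hp : f^[k - 1] a ∈ O := ⟨k - 1, rfl⟩
        simp only [hσ, if_pos hp]
        have h1 := Function.iterate_succ_apply' f (k - 1) a
        have hk1 : k - 1 + 1 = k := by omega
        rw [Nat.succ_eq_add_one, hk1] at h1
        show f (f^[k - 1] a) = f^[k] a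
        exact h1.symm
    · exact ⟨x, by simp only [hσ, if_neg hx]⟩
  have hσbij : Function.Bijective σ := Function.Surjective.bijective_of_finite hσsurj
  have hσR : ∀ z, σ z ≠ z → R z (σ z) := by
    intro z hz
    by_cases hzO : z ∈ O
    · simp only [hσ, if_pos hzO] at hz ⊢
      exact hfR z (hOW hzO)
    · simp only [hσ, if_neg hzO] at hz
      exact absurd rfl hz
  have := h σ hσbij hσR a
  simp only [hσ, if_pos haO] at this
  exact hfne a (hOW haO) this

end Aux

/-- In a matroid with independence family `Ind`, let `Y` be
independent and `Z ⊆ V` with `|Z| = |Y|`. If the bipartite exchange graph between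
`Y \ Z` and `Z \ Y` (edge `(y, z)` iff `(Y \ {y}) ∪ {z}` is independent) contains a
*unique* perfect matching, then `Z` is independent. -/
theorem stmt_3 {α : Type*} [DecidableEq α]
    (Ind : Finset α → Prop)
    (h_empty : Ind ∅)
    (h_down : ∀ ⦃A B : Finset α⦄, A ⊆ B → Ind B → Ind A)
    (h_aug : ∀ ⦃A B : Finset α⦄, Ind A → Ind B → A.card < B.card →
      ∃ e ∈ B \ A, Ind (insert e A))
    (Y Z : Finset α) (hY : Ind Y) (hcard : Z.card = Y.card)
    (h_unique : ∃! m : {y // y ∈ Y \ Z} → {z // z ∈ Z \ Y},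
      Function.Bijective m ∧ ∀ y, Ind (insert (m y : α) (Y.erase (y : α)))) :
    Ind Z := by
  classical
  by_contra hZ
  obtain ⟨C, hCZ, hCdep, hCmin⟩ := aux_exists_circuit Ind hZ
  obtain ⟨m, ⟨hmbij, hmedge⟩, hmuniq⟩ := h_unique
  set e := Equiv.ofBijective m hmbij with he
  -- the edge relation on the right side, via the matching
  set R : {z // z ∈ Z \ Y} → {z // z ∈ Z \ Y} → Prop :=
    fun z z' => Ind (insert (z' : α) (Y.erase ((e.symm z : {y // y ∈ Y \ Z}) : α))) with hR
  -- the identity is the only improving bijection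
  have hid : ∀ σ : {z // z ∈ Z \ Y} → {z // z ∈ Z \ Y}, Function.Bijective σ →
      (∀ z, σ z ≠ z → R z (σ z)) → ∀ z, σ z = z := by
    intro σ hσbij hσR
    have hm' : σ ∘ m = m := by
      apply hmuniq
      constructor
      · exact hσbij.comp hmbij
      · intro y
        by_cases hσy : σ (m y) = m y
        · simpa [Function.comp, hσy] using hmedge y
        · have := hσR (m y) hσy
          rw [hR] at this
          have hsy : e.symm (m y) = y := e.symm_apply_apply y
          rw [hsy] at this
          exact this
    intro z
    obtain ⟨y, rfl⟩ := hmbij.2 z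
    exact congrFun hm' y
  -- C is not contained in Y, so C \ Y is nonempty (as a set in the subtype)
  have hCnotY : ¬ C ⊆ Y := fun h => hCdep (h_down h hY)
  obtain ⟨c, hcC, hcY⟩ := Finset.not_subset.mp hCnotY
  set W : Set {z // z ∈ Z \ Y} := {z | (z : α) ∈ C} with hW
  have hWne : W.Nonempty :=
    ⟨⟨c, Finset.mem_sdiff.mpr ⟨hCZ hcC, hcY⟩⟩, hcC⟩
  obtain ⟨z₀, hz₀W, hz₀⟩ := aux_no_cycle R hid W hWne
  set y₀ := e.symm z₀ with hy₀
  have hy₀Y : (y₀ : α) ∈ Y \ Z := y₀.2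
  rw [Finset.mem_sdiff] at hy₀Y
  have hz₀ZY : (z₀ : α) ∈ Z \ Y := z₀.2
  rw [Finset.mem_sdiff] at hz₀ZY
  -- apply span transitivity with A = Y.erase y₀, S = C.erase z₀, x = z₀
  have hA : Ind (Y.erase (y₀ : α)) := h_down (Finset.erase_subset _ _) hY
  have hspan : ∀ s ∈ C.erase (z₀ : α),
      s ∈ Y.erase (y₀ : α) ∨ ¬ Ind (insert s (Y.erase (y₀ : α))) := by
    intro s hs
    rw [Finset.mem_erase] at hs
    by_cases hsY : s ∈ Y
    · left
      rw [Finset.mem_erase]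
      refine ⟨?_, hsY⟩
      intro hsy
      exact hy₀Y.2 (hsy ▸ hCZ hs.2)
    · right
      have hsZY : s ∈ Z \ Y := Finset.mem_sdiff.mpr ⟨hCZ hs.2, hsY⟩
      have hsW : (⟨s, hsZY⟩ : {z // z ∈ Z \ Y}) ∈ W := hs.2
      have hne : (⟨s, hsZY⟩ : {z // z ∈ Z \ Y}) ≠ z₀ := by
        intro h
        exact hs.1 (congrArg Subtype.val h)
      have := hz₀ _ hsW hne
      rw [hR] at this
      exact this
  have hS : Ind (C.erase (z₀ : α)) := hCmin _ hz₀W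
  have hxA : (z₀ : α) ∉ Y.erase (y₀ : α) :=
    fun h => hz₀ZY.2 (Finset.mem_of_mem_erase h)
  have hxS : (z₀ : α) ∉ C.erase (z₀ : α) := Finset.notMem_erase _ _
  have hxdep : ¬ Ind (insert (z₀ : α) (C.erase (z₀ : α))) := by
    rw [Finset.insert_erase hz₀W]
    exact hCdep
  have hfinal := aux_span_trans Ind h_down h_aug hA hspan hS hxA hxS hxdep
  -- but the matching gives an edge y₀ → z₀
  have hedge := hmedge y₀
  have : m y₀ = z₀ := by rw [hy₀]; exact e.apply_symm_apply z₀
  rw [this] at hedge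
  exact hfinal hedge
end

section
/- Let Y be a finite set, f a non-negative submodular function, and let X¹, ..., X^m be pairwise disjoint sets. If X is chosen uniformly at random from {X¹, ..., X^m} and f is monotone, then E[f(Y △ X)] ≥ ((m-1)/m) · f(Y). -/
/-- For a monotone non-negative submodular function `f`, a finite
set `Y`, and pairwise disjoint sets `X 1, …, X m` (`m ≥ 1`), if `X` is chosen
uniformly at random among them then `E[f(Y △ X)] ≥ ((m-1)/m) · f Y`. -/
theorem stmt_9 {α : Type*} [DecidableEq α] (f : Finset α → ℝ)
    (h_nonneg : ∀ A : Finset α, 0 ≤ f A)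
    (h_mono : ∀ ⦃A B : Finset α⦄, A ⊆ B → f A ≤ f B)
    (h_submod : ∀ A B : Finset α, f (A ∪ B) + f (A ∩ B) ≤ f A + f B)
    (Y : Finset α) (m : ℕ) (hm : 0 < m) (X : Fin m → Finset α)
    (h_disj : ∀ i j, i ≠ j → Disjoint (X i) (X j)) :
    (((m : ℝ) - 1) / m) * f Y ≤ (∑ j, f (symmDiff Y (X j))) / m := by
  have key : ∀ s : Finset (Fin m),
      f (Y \ s.sup X) + (s.card : ℝ) * f Y ≤ (∑ j ∈ s, f (Y \ X j)) + f Y := by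
    intro s
    induction s using Finset.induction_on with
    | empty => simp
    | @insert a s ha ih =>
      have hdisj : Disjoint (X a) (s.sup X) := by
        refine Finset.disjoint_sup_right.mpr ?_
        intro j hj
        exact h_disj a j (by rintro rfl; exact ha hj)
      have hsub := h_submod (Y \ X a) (Y \ s.sup X)
      have h1 : (Y \ X a) ∪ (Y \ s.sup X) = Y := by
        ext x
        simp only [Finset.mem_union, Finset.mem_sdiff]
        constructor
        · rintro (⟨h, _⟩ | ⟨h, _⟩) <;> exact h
        · intro hx
          by_cases hxa : x ∈ X a
          · exact Or.inr ⟨hx, fun hxs => Finset.disjoint_left.mp hdisj hxa hxs⟩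
          · exact Or.inl ⟨hx, hxa⟩
      have h2 : (Y \ X a) ∩ (Y \ s.sup X) = Y \ (insert a s).sup X := by
        ext x
        simp only [Finset.mem_inter, Finset.mem_sdiff, Finset.sup_insert,
          Finset.sup_eq_union, Finset.mem_union]
        tauto
      rw [h1, h2] at hsub
      rw [Finset.sum_insert ha, Finset.card_insert_of_notMem ha]
      push_cast
      nlinarith [ih]
  have hYle : ∀ j, f (Y \ X j) ≤ f (symmDiff Y (X j)) := by
    intro j
    apply h_mono
    intro x hx
    simp only [Finset.mem_sdiff] at hx
    simp [Finset.mem_symmDiff, hx.1, hx.2]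
  have hsum : ((m : ℝ) - 1) * f Y ≤ ∑ j, f (symmDiff Y (X j)) := by
    have h0 := key Finset.univ
    simp only [Finset.card_univ, Fintype.card_fin] at h0
    have h1 : (∑ j, f (Y \ X j)) ≤ ∑ j, f (symmDiff Y (X j)) :=
      Finset.sum_le_sum fun j _ => hYle j
    have h2 := h_nonneg (Y \ Finset.univ.sup X)
    nlinarith
  have hmpos : (0 : ℝ) < m := by exact_mod_cast hm
  rw [div_mul_eq_mul_div, div_le_div_iff₀ hmpos hmpos]
  nlinarith
end

section
/- Let M₁, M₂ be matroids on ground set V and let Y, P ∈ M₁ ∩ M₂ be common independent sets with |Y| ≤ |P|. Then there exist pairwise disjoint subsets X₁, ..., X_{|P|-|Y|} of Y ∪ P such that for each i, Y △ X_i is independent in both matroids and |Y △ X_i| = |Y| + 1. -/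
/-!
In each matroid `Mₖ`, let `Dₖ` be the elements `x ∈ P \ Y` for which `Y + x` is dependent. A rank
argument on fundamental circuits verifies Hall's condition, so there is an injection
`fₖ : Dₖ → Y \ P` with every `Y - fₖ x + x` independent in `Mₖ`. Starting at each of the
`|P \ Y| - |D₁|` elements that can be added to `Y` in `M₁`, follow `f₂` into `Y \ P` and `f₁⁻¹`
back. The walks are vertex-disjoint. At most `|Y \ P| - |D₁|` of them get stuck in `Y \ P`, so at
least `|P| - |Y|` reach an element that can be added in `M₂`. Each of these is a walk in the
exchange graph of `Y`. Take a shortest source–sink path inside it: it has no shortcuts, and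
by the classical unique-matching argument, `Y △ path` is then independent in both matroids.
-/

open Set

section Walk

variable {α : Type*} (r : α → α → Prop) (S T W : Set α)

structure IsWalk (n : ℕ) (u : ℕ → α) : Prop where
  start_mem : u 0 ∈ S
  end_mem : u n ∈ T
  rel : ∀ i < n, r (u i) (u (i + 1))
  mem : ∀ i ≤ n, u i ∈ W

structure IsShortcutFreeWalk (n : ℕ) (u : ℕ → α) : Prop extends IsWalk r S T W n u where
  not_rel : ∀ i j, i + 1 < j → j ≤ n → ¬ r (u i) (u j)
  notMem_start : ∀ i, 0 < i → i ≤ n → u i ∉ S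
  notMem_end : ∀ i < n, u i ∉ T

variable {r S T W} {n : ℕ} {u : ℕ → α}

namespace IsWalk

theorem drop (h : IsWalk r S T W n u) {i : ℕ} (hi : i ≤ n) (hS : u i ∈ S) :
    IsWalk r S T W (n - i) (fun k => u (k + i)) where
  start_mem := by simpa using hS
  end_mem := by simpa [Nat.sub_add_cancel hi] using h.end_mem
  rel k hk := by simpa [Nat.add_right_comm] using h.rel (k + i) (by omega)
  mem k hk := h.mem (k + i) (by omega)

theorem take (h : IsWalk r S T W n u) {i : ℕ} (hi : i ≤ n) (hT : u i ∈ T) :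
    IsWalk r S T W i u :=
  ⟨h.start_mem, hT, fun k hk => h.rel k (by omega), fun k hk => h.mem k (by omega)⟩

theorem skip (h : IsWalk r S T W n u) {i j : ℕ} (hij : i < j) (hj : j ≤ n)
    (hr : r (u i) (u j)) :
    IsWalk r S T W (n - (j - i - 1)) (fun k => if k ≤ i then u k else u (k + (j - i - 1))) where
  start_mem := by simpa using h.start_mem
  end_mem := by
    rw [if_neg (by omega), Nat.sub_add_cancel (by omega)]
    exact h.end_mem
  rel k hk := by
    by_cases hki : k < i
    · rw [if_pos hki.le, if_pos (by omega)]
      exact h.rel k (by omega)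
    by_cases hk' : k = i
    · subst hk'
      rw [if_pos le_rfl, if_neg (by omega), show k + 1 + (j - k - 1) = j by omega]
      exact hr
    · rw [if_neg (by omega), if_neg (by omega),
        show k + 1 + (j - i - 1) = k + (j - i - 1) + 1 by omega]
      exact h.rel _ (by omega)
  mem k hk := by
    split_ifs
    · exact h.mem k (by omega)
    · exact h.mem _ (by omega)

theorem exists_isShortcutFreeWalk (h : IsWalk r S T W n u) :
    ∃ m v, IsShortcutFreeWalk r S T W m v := by
  classical
  have hex : ∃ m v, IsWalk r S T W m v := ⟨n, u, h⟩
  obtain ⟨v, hv⟩ := Nat.find_spec hex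
  have hmin : ∀ m < Nat.find hex, ∀ v, ¬ IsWalk r S T W m v := fun m hm v hv =>
    Nat.find_min hex hm ⟨v, hv⟩
  refine ⟨_, v, hv, fun i j hij hj hr => ?_, fun i hi hin hS => ?_, fun i hi hT => ?_⟩
  · exact hmin _ (by omega) _ (hv.skip (by omega) hj hr)
  · exact hmin _ (by omega) _ (hv.drop hin hS)
  · exact hmin _ hi _ (hv.take hi.le hT)

end IsWalk

theorem IsShortcutFreeWalk.injOn (h : IsShortcutFreeWalk r S T W n u) : InjOn u (Iic n) := by
  intro i (hi : i ≤ n) j (hj : j ≤ n) huij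
  wlog hlt : i < j generalizing i j
  · rcases (not_lt.1 hlt).eq_or_lt with rfl | hlt'
    · rfl
    · exact (this hj hi huij.symm hlt').symm
  rcases hj.lt_or_eq with hjn | rfl
  · exact (h.not_rel i (j + 1) (by omega) hjn (huij ▸ h.rel j hjn)).elim
  · exact (h.notMem_end i hlt (huij ▸ h.end_mem)).elim

end Walk

section Orbit

open Function

variable {α : Type*} {step : α → α} {C : Set α}

theorem Set.InjOn.eq_and_eq_of_iterate_eq (hinj : InjOn step C) {s s' : α} (hs : s ∉ step '' C)
    (hs' : s' ∉ step '' C) {i j : ℕ} (hi : ∀ k < i, step^[k] s ∈ C)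
    (hj : ∀ k < j, step^[k] s' ∈ C) (h : step^[i] s = step^[j] s') : s = s' ∧ i = j := by
  induction i generalizing j with
  | zero =>
    cases j with
    | zero => exact ⟨h, rfl⟩
    | succ j =>
      exact (hs ⟨_, hj j j.lt_add_one, by simpa [iterate_succ_apply'] using h.symm⟩).elim
  | succ i ih =>
    cases j with
    | zero => exact (hs' ⟨_, hi i i.lt_add_one, by simpa [iterate_succ_apply'] using h⟩).elim
    | succ j =>
      rw [iterate_succ_apply', iterate_succ_apply'] at h
      obtain ⟨rfl, rfl⟩ := ih (fun k hk => hi k (by omega)) (fun k hk => hj k (by omega))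
        (hinj (hi i i.lt_add_one) (hj j j.lt_add_one) h)
      exact ⟨rfl, rfl⟩

theorem Set.InjOn.exists_iterate_notMem (hinj : InjOn step C) (hfin : (step '' C).Finite) {s : α}
    (hs : s ∉ step '' C) : ∃ n, (∀ k < n, step^[k] s ∈ C) ∧ step^[n] s ∉ C := by
  classical
  have hex : ∃ n, step^[n] s ∉ C := by
    by_contra! hall
    refine hfin.not_infinite (infinite_of_injective_forall_mem (f := fun k => step^[k + 1] s)
      (fun i j h => ?_) (fun k => ?_))
    · exact Nat.succ_injective (hinj.eq_and_eq_of_iterate_eq hs hs (fun k _ => hall k)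
        (fun k _ => hall k) h).2
    · rw [iterate_succ_apply']
      exact mem_image_of_mem _ (hall k)
  exact ⟨Nat.find hex, fun k hk => not_not.1 (Nat.find_min hex hk), Nat.find_spec hex⟩

open scoped Finset in
theorem Set.InjOn.exists_disjoint_orbits (hinj : InjOn step C) (hfin : (step '' C).Finite)
    {Src B : Finset α} {G : Set α} (hsrc : ∀ s ∈ Src, s ∉ step '' C)
    (hexit : ∀ s ∈ Src, ∀ n, (∀ k < n, step^[k] s ∈ C) → step^[n] s ∉ C →
      step^[n] s ∈ G ∨ step^[n] s ∈ B) {k : ℕ} (hk : k ≤ #Src - #B) :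
    ∃ (s : Fin k → α) (n : Fin k → ℕ), (∀ a, s a ∈ Src) ∧
      (∀ a, ∀ i < n a, step^[i] (s a) ∈ C) ∧ (∀ a, step^[n a] (s a) ∈ G) ∧
      ∀ a b i j, i ≤ n a → j ≤ n b → step^[i] (s a) = step^[j] (s b) → a = b := by
  classical
  choose! n hnC hnexit using fun s hs => hinj.exists_iterate_notMem hfin (hsrc s hs)
  obtain ⟨good, hgood_def⟩ : ∃ good, good = Src.filter fun s => step^[n s] s ∈ G := ⟨_, rfl⟩
  have hgood : k ≤ #good := by
    have hbad : #(Src.filter fun s => step^[n s] s ∉ G) ≤ #B := by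
      refine Finset.card_le_card_of_injOn (fun s => step^[n s] s) (fun s hs => ?_)
        (fun s hs s' hs' h => ?_)
      · obtain ⟨hs, hG⟩ := Finset.mem_filter.1 hs
        exact (hexit s hs _ (hnC s hs) (hnexit s hs)).resolve_left hG
      · obtain ⟨hs, -⟩ := Finset.mem_filter.1 hs
        obtain ⟨hs', -⟩ := Finset.mem_filter.1 hs'
        exact (hinj.eq_and_eq_of_iterate_eq (hsrc s hs) (hsrc s' hs')
          (fun i hi => hnC s hs i hi) (fun i hi => hnC s' hs' i hi) h).1
    have := Finset.card_filter_add_card_filter_not (s := Src) (fun s => step^[n s] s ∈ G)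
    rw [hgood_def]
    omega
  let e : Fin k ↪ good := (Fin.castLEEmb hgood).trans good.equivFin.symm.toEmbedding
  have hmem : ∀ a, (e a : α) ∈ Src ∧ step^[n (e a)] (e a) ∈ G := fun a => by
    simpa [hgood_def] using (e a).2
  refine ⟨fun a => e a, fun a => n (e a), fun a => (hmem a).1, fun a => hnC _ (hmem a).1,
    fun a => (hmem a).2, fun a b i j (hi : i ≤ n (e a)) (hj : j ≤ n (e b)) h => ?_⟩
  refine e.injective (Subtype.ext (hinj.eq_and_eq_of_iterate_eq (hsrc _ (hmem a).1)
    (hsrc _ (hmem b).1) (fun l hl => hnC _ (hmem a).1 l (by omega))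
    (fun l hl => hnC _ (hmem b).1 l (by omega)) h).1)

open Finset in
theorem exists_injOn_step_of_matchings {Q R D₁ D₂ : Finset α} (hQR : Disjoint Q R)
    (hD₁ : D₁ ⊆ Q) (hD₂ : D₂ ⊆ Q) {f₁ f₂ : α → α} (hf₁ : InjOn f₁ D₁) (hf₂ : InjOn f₂ D₂)
    (hf₁R : ∀ x ∈ D₁, f₁ x ∈ R) (hf₂R : ∀ x ∈ D₂, f₂ x ∈ R) :
    ∃ step : α → α, InjOn step (↑D₂ ∪ f₁ '' ↑D₁) ∧ MapsTo step (↑D₂ ∪ f₁ '' ↑D₁) (↑R ∪ ↑D₁) ∧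
      (∀ v ∈ D₂, step v = f₂ v) ∧ ∀ x ∈ D₁, step (f₁ x) = x := by
  classical
  set step : α → α := fun v =>
    if v ∈ D₂ then f₂ v else if h : ∃ x ∈ D₁, f₁ x = v then h.choose else v
  have hstep₂ : ∀ v ∈ D₂, step v = f₂ v := fun v hv => if_pos hv
  have hstep₁ : ∀ x ∈ D₁, step (f₁ x) = x := fun x hx => by
    have h : ∃ x' ∈ D₁, f₁ x' = f₁ x := ⟨x, hx, rfl⟩
    have hx₂ : f₁ x ∉ D₂ := fun hx₂ => disjoint_left.1 hQR (hD₂ hx₂) (hf₁R x hx)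
    simp only [step, if_neg hx₂, dif_pos h]
    exact hf₁ h.choose_spec.1 hx h.choose_spec.2
  refine ⟨step, ?_, ?_, hstep₂, hstep₁⟩
  · rintro v (hv | ⟨x, hx, rfl⟩) w (hw | ⟨x', hx', rfl⟩) h
    · rw [hstep₂ v hv, hstep₂ w hw] at h
      exact hf₂ hv hw h
    · rw [hstep₂ v hv, hstep₁ x' hx'] at h
      exact (disjoint_left.1 hQR (hD₁ hx') (h ▸ hf₂R v hv)).elim
    · rw [hstep₁ x hx, hstep₂ w hw] at h
      exact (disjoint_left.1 hQR (hD₁ hx) (h ▸ hf₂R w hw)).elim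
    · rw [hstep₁ x hx, hstep₁ x' hx'] at h
      rw [h]
  · rintro _ (hv | ⟨x, hx, rfl⟩)
    · exact Or.inl (by rw [hstep₂ _ hv]; exact hf₂R _ hv)
    · exact Or.inr (by rw [hstep₁ x hx]; exact hx)

open Finset in
theorem exists_disjoint_alternating_walks [DecidableEq α] {r : α → α → Prop} {S T : Set α}
    {Q R D₁ D₂ : Finset α} (hQR : Disjoint Q R) (hD₁ : D₁ ⊆ Q) (hD₂ : D₂ ⊆ Q)
    (hS : ∀ x ∈ Q \ D₁, x ∈ S) (hT : ∀ x ∈ Q \ D₂, x ∈ T) {f₁ f₂ : α → α}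
    (hf₁ : InjOn f₁ D₁) (hf₂ : InjOn f₂ D₂) (hf₁R : ∀ x ∈ D₁, f₁ x ∈ R ∧ r (f₁ x) x)
    (hf₂R : ∀ x ∈ D₂, f₂ x ∈ R ∧ r x (f₂ x)) {k : ℕ} (hk : k ≤ #Q - #R) :
    ∃ (n : Fin k → ℕ) (u : Fin k → ℕ → α), (∀ a, IsWalk r S T (↑Q ∪ ↑R) (n a) (u a)) ∧
      ∀ a b i j, i ≤ n a → j ≤ n b → u a i = u b j → a = b := by
  obtain ⟨step, hinj, hmaps, hstep₂, hstep₁⟩ := exists_injOn_step_of_matchings hQR hD₁ hD₂ hf₁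
    hf₂ (fun x hx => (hf₁R x hx).1) (fun x hx => (hf₂R x hx).1)
  set C : Set α := ↑D₂ ∪ f₁ '' ↑D₁
  have himage := hmaps.image_subset
  have hsrc : ∀ s ∈ Q \ D₁, s ∉ step '' C := fun s hs h => by
    rcases himage h with h | h
    · exact disjoint_left.1 hQR (mem_sdiff.1 hs).1 h
    · exact (mem_sdiff.1 hs).2 h
  have hmem : ∀ s ∈ Q \ D₁, ∀ n, (∀ k < n, step^[k] s ∈ C) → step^[n] s ∈ Q ∪ R := by
    rintro s hs (_ | n) hn
    · exact mem_union_left _ (mem_sdiff.1 hs).1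
    · rw [Function.iterate_succ_apply']
      rcases himage ⟨_, hn n n.lt_add_one, rfl⟩ with h | h
      · exact mem_union_right _ h
      · exact mem_union_left _ (hD₁ h)
  have hexit : ∀ s ∈ Q \ D₁, ∀ n, (∀ k < n, step^[k] s ∈ C) → step^[n] s ∉ C →
      step^[n] s ∈ T ∨ step^[n] s ∈ R \ D₁.image f₁ := by
    intro s hs n hn hnC
    rcases mem_union.1 (hmem s hs n hn) with h | h
    · exact Or.inl (hT _ (mem_sdiff.2 ⟨h, fun h₂ => hnC (Or.inl h₂)⟩))
    · exact Or.inr (mem_sdiff.2 ⟨h, fun h₁ => hnC (Or.inr (by simpa using h₁))⟩)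
  have hcard : k ≤ #(Q \ D₁) - #(R \ D₁.image f₁) := by
    have hD₁R : D₁.image f₁ ⊆ R := image_subset_iff.2 fun x hx => (hf₁R x hx).1
    have := Finset.card_le_card hD₁R
    rw [card_sdiff_of_subset hD₁, card_sdiff_of_subset hD₁R, card_image_of_injOn hf₁] at *
    omega
  obtain ⟨s, n, hsQ, hnC, hnT, hdisj⟩ := hinj.exists_disjoint_orbits
    ((finite_toSet (R ∪ D₁)).subset (by simpa using himage)) hsrc hexit hcard
  refine ⟨n, fun a i => step^[i] (s a),
    fun a => ⟨hS _ (hsQ a), hnT a, fun i hi => ?_, fun i hi => ?_⟩, hdisj⟩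
  · simp only [Function.iterate_succ_apply']
    rcases hnC a i hi with hv | ⟨x, hx, hv⟩
    · rw [hstep₂ _ hv]
      exact (hf₂R _ hv).2
    · rw [← hv, hstep₁ x hx]
      exact (hf₁R x hx).2
  · simpa using hmem _ (hsQ a) i fun l hl => hnC a l (by omega)

end Orbit

section Reindex

variable {α : Type*}

theorem Set.image_Iic_eq_insert_image_Iio (x : ℕ → α) (m : ℕ) :
    x '' Iic m = insert (x 0) ((fun i => x (i + 1)) '' Iio m) := by
  ext e
  simp only [mem_image, mem_Iic, mem_Iio, mem_insert_iff]
  constructor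
  · rintro ⟨_ | i, hi, rfl⟩
    · exact Or.inl rfl
    · exact Or.inr ⟨i, by omega, rfl⟩
  · rintro (rfl | ⟨i, hi, rfl⟩)
    · exact ⟨0, by omega, rfl⟩
    · exact ⟨i + 1, by omega, rfl⟩

theorem Set.image_Iic_rev (x : ℕ → α) (m : ℕ) : (fun i => x (m - i)) '' Iic m = x '' Iic m := by
  ext e
  simp only [mem_image, mem_Iic]
  constructor <;> rintro ⟨i, hi, rfl⟩
  · exact ⟨m - i, by omega, rfl⟩
  · exact ⟨m - i, by omega, by rw [show m - (m - i) = i by omega]⟩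

theorem Set.image_Iio_rev (y : ℕ → α) (m : ℕ) :
    (fun i => y (m - 1 - i)) '' Iio m = y '' Iio m := by
  ext e
  simp only [mem_image, mem_Iio]
  constructor <;> rintro ⟨i, hi, rfl⟩
  · exact ⟨m - 1 - i, by omega, rfl⟩
  · exact ⟨m - 1 - i, by omega, by rw [show m - 1 - (m - 1 - i) = i by omega]⟩

theorem Finset.symmDiff_union_eq_sdiff_union [DecidableEq α] {Y A B : Finset α}
    (hA : Disjoint A Y) (hB : B ⊆ Y) : symmDiff Y (A ∪ B) = Y \ B ∪ A := by
  ext e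
  have := @Finset.disjoint_left.1 hA e
  have := @hB e
  simp only [Finset.mem_symmDiff, Finset.mem_union, Finset.mem_sdiff]
  tauto

end Reindex

namespace Matroid

variable {α : Type*} {M M₁ M₂ : Matroid α} {I Y : Set α}

theorem Indep.sdiff_image_union_image_indep (hI : M.Indep I) {m : ℕ} {x y : ℕ → α}
    (hy : ∀ i < m, y i ∈ I) (hx : ∀ i < m, x i ∈ M.E \ M.closure (I \ {y i}))
    (hxy : ∀ i j, i < j → j < m → x j ∈ M.closure (I \ {y i})) :
    M.Indep (I \ y '' Iio m ∪ x '' Iio m) := by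
  induction m generalizing I with
  | zero => simpa using hI
  | succ m ih =>
    have hxm : x m ∈ M.E \ M.closure (I \ {y m}) := hx m m.lt_add_one
    have hym_ne : ∀ i < m, y i ≠ y m := fun i hi h =>
      hxm.2 (h ▸ hxy i m hi m.lt_add_one)
    have hxm_ne : ∀ i < m, x m ≠ y i := fun i hi h =>
      hI.notMem_closure_sdiff_of_mem (hy i (by omega)) (h ▸ hxy i m hi m.lt_add_one)
    -- Swapping the last pair first leaves the closures seen by the other pairs unchanged.
    set I' := insert (x m) (I \ {y m})
    have hcl : ∀ i < m, M.closure (I' \ {y i}) = M.closure (I \ {y i}) := by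
      intro i hi
      have hym : y m ∈ I \ {y i} := ⟨hy m (by omega), (hym_ne i hi).symm⟩
      rw [show I' \ {y i} = insert (x m) ((I \ {y i}) \ {y m}) by
        rw [insert_sdiff_of_notMem _ (notMem_singleton_iff.2 (hxm_ne i hi)), sdiff_sdiff_comm]]
      refine (closure_insert_congr (f := y m) ⟨?_, fun h => hxm.2 ?_⟩).trans ?_
      · rw [insert_sdiff_self_of_mem hym]
        exact hxy i m hi m.lt_add_one
      · exact M.closure_subset_closure (sdiff_subset_sdiff_left sdiff_subset) h
      · rw [insert_sdiff_self_of_mem hym]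
    have key := ih (I := I') ((hI.sdiff _).insert_indep_iff.2 (Or.inl hxm))
      (fun i hi => mem_insert_of_mem _ ⟨hy i (by omega), hym_ne i hi⟩)
      (fun i hi => hcl i hi ▸ hx i (by omega))
      (fun i j hij hj => hcl i (by omega) ▸ hxy i j hij (by omega))
    have hxm_notMem : x m ∉ y '' Iio m := fun ⟨i, hi, h⟩ => hxm_ne i hi h.symm
    rw [Iio_add_one_eq_Iic, ← Iio_insert, image_insert_eq, image_insert_eq, insert_eq (y m),
      ← sdiff_sdiff, union_insert]
    rwa [insert_sdiff_of_notMem _ hxm_notMem, insert_union] at key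

theorem sdiff_union_indep_of_chain {m : ℕ} {x y : ℕ → α}
    (hx₀Y : x 0 ∉ Y) (hx₀ : M.Indep (insert (x 0) Y)) (hy : ∀ i < m, y i ∈ Y)
    (hswap : ∀ i < m, M.Indep (insert (x (i + 1)) (Y \ {y i})))
    (hspan : ∀ i < m, ¬ M.Indep (insert (x (i + 1)) Y))
    (hshort : ∀ i j, i < j → j < m → ¬ M.Indep (insert (x (j + 1)) (Y \ {y i}))) :
    M.Indep (Y \ y '' Iio m ∪ x '' Iic m) := by
  have hY : M.Indep Y := hx₀.subset (subset_insert _ _)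
  have hxY : ∀ i < m, x (i + 1) ∉ Y := fun i hi h =>
    hspan i hi (by rwa [insert_eq_of_mem h])
  have hxE : ∀ i < m, x (i + 1) ∈ M.E := fun i hi =>
    (hswap i hi).subset_ground (mem_insert _ _)
  have hx₀cl : x 0 ∉ M.closure Y := ((hY.insert_indep_iff_of_notMem hx₀Y).1 hx₀).2
  have hdel : ∀ i < m, insert (x 0) Y \ {y i} = insert (x 0) (Y \ {y i}) := fun i hi =>
    insert_sdiff_of_notMem _ (notMem_singleton_iff.2 fun h => hx₀Y (h ▸ hy i hi))
  have key := hx₀.sdiff_image_union_image_indep (m := m) (x := fun i => x (i + 1)) (y := y)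
    (fun i hi => mem_insert_of_mem _ (hy i hi))
    (fun i hi => by
      refine ⟨hxE i hi, fun h => hx₀cl ?_⟩
      rw [hdel i hi] at h
      -- `x (i + 1)` is spanned by `Y` but not by `Y - y i`, so exchanging it against `x 0`
      -- would put `x 0` in the span of `Y`.
      have hn : x (i + 1) ∉ M.closure (Y \ {y i}) :=
        (((hY.sdiff _).insert_indep_iff_of_notMem fun h => hxY i hi h.1).1 (hswap i hi)).2
      refine M.closure_subset_closure_of_subset_closure (insert_subset ?_ ?_)
        (mem_closure_insert hn h)
      · exact hY.mem_closure_iff'.2 ⟨hxE i hi, fun h => (hspan i hi h).elim⟩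
      · exact sdiff_subset.trans (M.subset_closure Y hY.subset_ground))
    (fun i j hij hj => by
      rw [hdel i (by omega)]
      exact M.closure_subset_closure (subset_insert _ _)
        ((hY.sdiff _).mem_closure_iff'.2 ⟨hxE j hj, fun h => (hshort i j hij hj h).elim⟩))
  have hx₀_notMem : x 0 ∉ y '' Iio m := fun ⟨i, hi, h⟩ => hx₀Y (h ▸ hy i hi)
  rw [image_Iic_eq_insert_image_Iio, union_insert]
  rwa [insert_sdiff_of_notMem _ hx₀_notMem, insert_union] at key

theorem sdiff_union_indep_of_reverse_chain {m : ℕ} {x y : ℕ → α}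
    (hxmY : x m ∉ Y) (hxm : M.Indep (insert (x m) Y)) (hy : ∀ i < m, y i ∈ Y)
    (hswap : ∀ i < m, M.Indep (insert (x i) (Y \ {y i})))
    (hspan : ∀ i < m, ¬ M.Indep (insert (x i) Y))
    (hshort : ∀ i j, i < j → j < m → ¬ M.Indep (insert (x i) (Y \ {y j}))) :
    M.Indep (Y \ y '' Iio m ∪ x '' Iic m) := by
  have key := sdiff_union_indep_of_chain (m := m) (x := fun i => x (m - i))
    (y := fun i => y (m - 1 - i)) (by simpa) (by simpa) (fun i hi => hy _ (by omega))
    (fun i hi => by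
      simpa [show m - (i + 1) = m - 1 - i by omega] using hswap (m - 1 - i) (by omega))
    (fun i hi => by
      simpa [show m - (i + 1) = m - 1 - i by omega] using hspan (m - 1 - i) (by omega))
    (fun i j hij hj => by
      simpa [show m - (j + 1) = m - 1 - j by omega]
        using hshort (m - 1 - j) (m - 1 - i) (by omega) (by omega))
  rwa [image_Iio_rev, image_Iic_rev] at key

theorem Indep.mem_closure_sdiff_of_forall_not_indep (hI : M.Indep I) {x : α} {Z : Set α}
    (hx : x ∈ M.closure I) (hxI : x ∉ I) (hZ : ∀ y ∈ Z, ¬ M.Indep (insert x (I \ {y}))) :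
    x ∈ M.closure (I \ Z) := by
  refine M.closure_subset_closure ?_
    ((hI.fundCircuit_isCircuit hx hxI).mem_closure_sdiff_singleton_of_mem (M.mem_fundCircuit x I))
  rintro y ⟨hyC, hyx : y ≠ x⟩
  have hyI : y ∈ I := (mem_insert_iff.1 (M.fundCircuit_subset_insert x I hyC)).resolve_left hyx
  refine ⟨hyI, fun hyZ => hZ y hyZ ?_⟩
  have := (hI.mem_fundCircuit_iff hx hxI).1 hyC
  rwa [insert_sdiff_of_notMem _ (notMem_singleton_iff.2 hyx.symm)] at this

theorem Indep.card_le_card_of_subset_closure {I J : Finset α} (hI : M.Indep (I : Set α))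
    (hIJ : (I : Set α) ⊆ M.closure J) : I.card ≤ J.card := by
  have := calc (I : Set α).encard = M.eRk I := hI.eRk_eq_encard.symm
    _ ≤ M.eRk (M.closure J) := M.eRk_mono hIJ
    _ = M.eRk J := M.eRk_closure_eq J
    _ ≤ (J : Set α).encard := M.eRk_le_encard J
  simpa [encard_coe_eq_coe_finsetCard] using this

open Finset in
theorem Indep.card_le_card_of_exchange_partners [DecidableEq α] {Y P S N : Finset α}
    (hY : M.Indep (Y : Set α)) (hP : M.Indep (P : Set α))
    (hS : ∀ x ∈ S, x ∈ P ∧ x ∉ Y ∧ ¬ M.Indep (insert x (Y : Set α)))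
    (hN : ∀ x ∈ S, ∀ y ∈ Y \ P, M.Indep (insert x ((Y : Set α) \ {y})) → y ∈ N) :
    #S ≤ #N := by
  have hspan : ∀ x ∈ S, x ∈ M.closure ↑(Y ∩ (P ∪ N)) := by
    intro x hx
    obtain ⟨hxP, hxY, hdep⟩ := hS x hx
    have hxcl : x ∈ M.closure Y :=
      hY.mem_closure_iff'.2 ⟨hP.subset_ground hxP, fun h => (hdep h).elim⟩
    -- The fundamental circuit of `x` in `Y` only meets `Y` inside `P ∪ N`.
    have := hY.mem_closure_sdiff_of_forall_not_indep (Z := ↑Y \ ↑(P ∪ N)) hxcl hxY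
      fun y ⟨hyY, hy⟩ hind => hy <| mem_union.2 <| (em (y ∈ P)).imp_right
        fun hyP => hN x hx y (mem_sdiff.2 ⟨hyY, hyP⟩) hind
    rwa [Set.sdiff_sdiff_right_self, ← coe_inter] at this
  have hdisj : Disjoint (Y ∩ P) S :=
    disjoint_left.2 fun a ha haS => (hS a haS).2.1 (mem_inter.1 ha).1
  have hle : #(Y ∩ P ∪ S) ≤ #(Y ∩ (P ∪ N)) := by
    refine Indep.card_le_card_of_subset_closure (M := M) (hP.subset ?_) ?_
    · rw [coe_union, coe_inter]
      exact Set.union_subset Set.inter_subset_right fun x hx => (hS x hx).1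
    · rw [coe_union]
      refine Set.union_subset ?_ fun x hx => hspan x hx
      refine (coe_subset.2 ?_).trans (M.subset_closure _
        ((coe_subset.2 inter_subset_left).trans hY.subset_ground))
      exact inter_subset_inter_left subset_union_left
  rw [card_union_of_disjoint hdisj, Finset.inter_union_distrib_left] at hle
  have := card_union_le (Y ∩ P) (Y ∩ N)
  have := Finset.card_le_card (inter_subset_right (s₁ := Y) (s₂ := N))
  omega

open Finset in
theorem Indep.exists_injOn_exchange [DecidableEq α] {Y P D : Finset α}
    (hY : M.Indep (Y : Set α)) (hP : M.Indep (P : Set α))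
    (hD : ∀ x ∈ D, x ∈ P ∧ x ∉ Y ∧ ¬ M.Indep (insert x (Y : Set α))) :
    ∃ f : α → α, Set.InjOn f D ∧
      ∀ x ∈ D, f x ∈ Y \ P ∧ M.Indep (insert x ((Y : Set α) \ {f x})) := by
  classical
  set N : D → Finset α := fun x =>
    (Y \ P).filter fun y => M.Indep (insert x.1 ((Y : Set α) \ {y}))
  have hall : ∀ S : Finset D, #S ≤ #(S.biUnion N) := fun S => by
    simpa using hY.card_le_card_of_exchange_partners hP
      (S := S.map (Function.Embedding.subtype _)) (by simpa using fun x hx _ => hD x hx)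
      (by simpa [N] using fun x hx hxS y hyY hyP hind => ⟨x, ⟨hx, hxS⟩, ⟨hyY, hyP⟩, hind⟩)
  obtain ⟨f, hf, hfN⟩ := (all_card_le_biUnion_card_iff_exists_injective N).1 hall
  refine ⟨fun x => if hx : x ∈ D then f ⟨x, hx⟩ else x, fun x hx x' hx' h => ?_,
    fun x hx => ?_⟩
  · simp only [dif_pos (mem_coe.1 hx), dif_pos (mem_coe.1 hx')] at h
    exact congrArg Subtype.val (hf h)
  · simpa [dif_pos hx, N] using hfN ⟨x, hx⟩

def addable (M : Matroid α) (Y : Set α) : Set α := {x | x ∉ Y ∧ M.Indep (insert x Y)}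

def ExchangeArc (M₁ M₂ : Matroid α) (Y : Set α) (u v : α) : Prop :=
  (u ∈ Y ∧ v ∉ Y ∧ M₁.Indep (insert v (Y \ {u}))) ∨
    (u ∉ Y ∧ v ∈ Y ∧ M₂.Indep (insert u (Y \ {v})))

theorem _root_.IsWalk.mem_iff_odd {T W : Set α} {n : ℕ} {u : ℕ → α}
    (h : IsWalk (ExchangeArc M₁ M₂ Y) (addable M₁ Y) T W n u) {i : ℕ} (hi : i ≤ n) :
    u i ∈ Y ↔ Odd i := by
  induction i with
  | zero => simpa using h.start_mem.1
  | succ i ih =>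
    rw [Nat.odd_add_one, ← ih (by omega)]
    rcases h.rel i (by omega) with ⟨hu, hv, -⟩ | ⟨hu, hv, -⟩ <;> simp [hu, hv]

theorem _root_.IsShortcutFreeWalk.exists_eq_two_mul {W : Set α} {n : ℕ} {u : ℕ → α}
    (h : IsShortcutFreeWalk (ExchangeArc M₁ M₂ Y) (addable M₁ Y) (addable M₂ Y) W n u) :
    ∃ m, n = 2 * m := by
  obtain ⟨m, hm⟩ := Nat.not_odd_iff_even.1 ((h.toIsWalk.mem_iff_odd le_rfl).not.1 h.end_mem.1)
  exact ⟨m, by omega⟩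

theorem _root_.IsShortcutFreeWalk.indep_sdiff_union {W : Set α} {m : ℕ} {u : ℕ → α}
    (h : IsShortcutFreeWalk (ExchangeArc M₁ M₂ Y) (addable M₁ Y) (addable M₂ Y) W (2 * m) u) :
    M₁.Indep (Y \ (fun i => u (2 * i + 1)) '' Iio m ∪ (fun i => u (2 * i)) '' Iic m) ∧
      M₂.Indep (Y \ (fun i => u (2 * i + 1)) '' Iio m ∪ (fun i => u (2 * i)) '' Iic m) := by
  have hx : ∀ i ≤ m, u (2 * i) ∉ Y := fun i hi hu =>
    Nat.not_odd_iff_even.2 (even_two_mul i) ((h.toIsWalk.mem_iff_odd (by omega)).1 hu)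
  have hy : ∀ i < m, u (2 * i + 1) ∈ Y := fun i hi =>
    (h.toIsWalk.mem_iff_odd (by omega)).2 (odd_two_mul_add_one i)
  refine ⟨sdiff_union_indep_of_chain h.start_mem.1 h.start_mem.2 hy (fun i hi => ?_)
    (fun i hi hind => ?_) (fun i j hij hj hind => ?_),
    sdiff_union_indep_of_reverse_chain (hx m le_rfl) h.end_mem.2 hy (fun i hi => ?_)
    (fun i hi hind => ?_) (fun i j hij hj hind => ?_)⟩
  · obtain ⟨-, -, hind⟩ | ⟨hu, -⟩ := h.rel (2 * i + 1) (by omega)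
    · exact hind
    · exact (hu (hy i hi)).elim
  · exact h.notMem_start (2 * (i + 1)) (by omega) (by omega) ⟨hx (i + 1) hi, hind⟩
  · exact h.not_rel (2 * i + 1) (2 * (j + 1)) (by omega) (by omega)
      (Or.inl ⟨hy i (by omega), hx (j + 1) hj, hind⟩)
  · obtain ⟨hu, -⟩ | ⟨-, -, hind⟩ := h.rel (2 * i) (by omega)
    · exact (hx i hi.le hu).elim
    · exact hind
  · exact h.notMem_end (2 * i) (by omega) ⟨hx i hi.le, hind⟩
  · exact h.not_rel (2 * i) (2 * j + 1) (by omega) (by omega)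
      (Or.inr ⟨hx i (by omega), hy j hj, hind⟩)

open scoped Finset in
theorem _root_.IsWalk.exists_augmentation [DecidableEq α] {Y : Finset α} {W : Set α} {n : ℕ}
    {u : ℕ → α} (h : IsWalk (ExchangeArc M₁ M₂ Y) (addable M₁ Y) (addable M₂ Y) W n u) :
    ∃ X : Finset α, ↑X ⊆ W ∧ M₁.Indep ↑(symmDiff Y X) ∧ M₂.Indep ↑(symmDiff Y X) ∧
      #(symmDiff Y X) = #Y + 1 := by
  obtain ⟨n, v, hv⟩ := h.exists_isShortcutFreeWalk
  obtain ⟨m, rfl⟩ := hv.exists_eq_two_mul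
  set xs := (Finset.Iic m).image fun i => v (2 * i)
  set ys := (Finset.Iio m).image fun i => v (2 * i + 1)
  have hxs : Disjoint xs Y := Finset.disjoint_left.2 fun e he heY => by
    obtain ⟨i, hi, rfl⟩ := Finset.mem_image.1 he
    exact Nat.not_odd_iff_even.2 (even_two_mul i)
      ((hv.toIsWalk.mem_iff_odd (by have := Finset.mem_Iic.1 hi; omega)).1 heY)
  have hys : ys ⊆ Y := fun e he => by
    obtain ⟨i, hi, rfl⟩ := Finset.mem_image.1 he
    exact (hv.toIsWalk.mem_iff_odd (by have := Finset.mem_Iio.1 hi; omega)).2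
      (odd_two_mul_add_one i)
  have hsymm := Finset.symmDiff_union_eq_sdiff_union hxs hys
  have hcoe : ((Y \ ys ∪ xs : Finset α) : Set α) =
      ↑Y \ (fun i => v (2 * i + 1)) '' Iio m ∪ (fun i => v (2 * i)) '' Iic m := by
    simp [xs, ys]
  have hxs_card : #xs = m + 1 := by
    rw [Finset.card_image_of_injOn, Nat.card_Iic]
    intro i hi j hj hij
    simp only [Finset.coe_Iic, Set.mem_Iic] at hi hj
    have := hv.injOn (show 2 * i ≤ 2 * m by omega) (show 2 * j ≤ 2 * m by omega) hij
    omega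
  have hys_card : #ys = m := by
    rw [Finset.card_image_of_injOn, Nat.card_Iio]
    intro i hi j hj hij
    simp only [Finset.coe_Iio, Set.mem_Iio] at hi hj
    have := hv.injOn (show 2 * i + 1 ≤ 2 * m by omega) (show 2 * j + 1 ≤ 2 * m by omega) hij
    omega
  obtain ⟨h₁, h₂⟩ := hv.indep_sdiff_union
  refine ⟨xs ∪ ys, ?_, by rwa [hsymm, hcoe], by rwa [hsymm, hcoe], ?_⟩
  · intro e he
    obtain ⟨i, hi, rfl⟩ | ⟨i, hi, rfl⟩ :=
      (Finset.mem_union.1 he).imp Finset.mem_image.1 Finset.mem_image.1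
    · exact hv.mem _ (by have := Finset.mem_Iic.1 hi; omega)
    · exact hv.mem _ (by have := Finset.mem_Iio.1 hi; omega)
  · rw [hsymm, Finset.card_union_of_disjoint (Finset.disjoint_of_subset_left Finset.sdiff_subset
      hxs.symm), Finset.card_sdiff_of_subset hys, hxs_card, hys_card]
    have := Finset.card_le_card hys
    omega

open Finset in
theorem exists_disjoint_augmentations [DecidableEq α] (M₁ M₂ : Matroid α) (Y P : Finset α)
    (hY₁ : M₁.Indep (Y : Set α)) (hY₂ : M₂.Indep (Y : Set α)) (hP₁ : M₁.Indep (P : Set α))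
    (hP₂ : M₂.Indep (P : Set α)) :
    ∃ X : Fin (#P - #Y) → Finset α, (∀ i, X i ⊆ Y ∪ P) ∧
      Pairwise (fun i j => Disjoint (X i) (X j)) ∧
      ∀ i, M₁.Indep ↑(symmDiff Y (X i)) ∧ M₂.Indep ↑(symmDiff Y (X i)) ∧
        #(symmDiff Y (X i)) = #Y + 1 := by
  classical
  have hD : ∀ M : Matroid α, ∀ x ∈ (P \ Y).filter fun x => ¬ M.Indep (insert x (Y : Set α)),
      x ∈ P ∧ x ∉ Y ∧ ¬ M.Indep (insert x (Y : Set α)) := fun M x hx => by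
    simpa [and_assoc] using hx
  have haddable : ∀ M : Matroid α, ∀ x ∈ (P \ Y) \ (P \ Y).filter
      (fun x => ¬ M.Indep (insert x (Y : Set α))), x ∈ addable M Y := fun M x hx => by
    simp only [Finset.mem_sdiff, mem_filter, not_and, not_not] at hx
    exact ⟨hx.1.2, hx.2 hx.1⟩
  obtain ⟨f₁, hf₁, hf₁Y⟩ := hY₁.exists_injOn_exchange hP₁ (hD M₁)
  obtain ⟨f₂, hf₂, hf₂Y⟩ := hY₂.exists_injOn_exchange hP₂ (hD M₂)
  have hk : #P - #Y ≤ #(P \ Y) - #(Y \ P) := by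
    have := card_sdiff_add_card_inter P Y
    have := card_sdiff_add_card_inter Y P
    rw [Finset.inter_comm] at this
    omega
  obtain ⟨n, u, hu, hdisj⟩ := exists_disjoint_alternating_walks (r := ExchangeArc M₁ M₂ Y)
    disjoint_sdiff_sdiff (filter_subset _ _) (filter_subset _ _) (haddable M₁) (haddable M₂)
    hf₁ hf₂ (fun x hx => ⟨(hf₁Y x hx).1, Or.inl ⟨(Finset.mem_sdiff.1 (hf₁Y x hx).1).1,
      (hD M₁ x hx).2.1, (hf₁Y x hx).2⟩⟩)
    (fun x hx => ⟨(hf₂Y x hx).1, Or.inr ⟨(hD M₂ x hx).2.1,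
      (Finset.mem_sdiff.1 (hf₂Y x hx).1).1, (hf₂Y x hx).2⟩⟩) hk
  have hPY : ∀ v ∈ (↑(P \ Y) ∪ ↑(Y \ P) : Set α), v ∈ Y ∪ P := by
    rintro v (h | h)
    · exact mem_union_right _ (Finset.mem_sdiff.1 h).1
    · exact mem_union_left _ (Finset.mem_sdiff.1 h).1
  have hwalk : ∀ a, IsWalk (ExchangeArc M₁ M₂ Y) (addable M₁ Y) (addable M₂ Y)
      {v | v ∈ Y ∪ P ∧ ∃ i ≤ n a, u a i = v} (n a) (u a) := fun a =>
    { hu a with mem := fun i hi => ⟨hPY _ ((hu a).mem i hi), i, hi, rfl⟩ }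
  choose X hXW hX using fun a => (hwalk a).exists_augmentation
  refine ⟨X, fun a v hv => (hXW a hv).1, fun a b hab => disjoint_left.2 fun v hva hvb => ?_, hX⟩
  obtain ⟨-, i, hi, rfl⟩ := hXW a hva
  obtain ⟨-, j, hj, hij⟩ := hXW b hvb
  exact hab (hdisj a b i j hi hj hij.symm)

def ofIndepFinset [DecidableEq α] (Ind : Finset α → Prop) (h_empty : Ind ∅)
    (h_down : ∀ ⦃A B : Finset α⦄, A ⊆ B → Ind B → Ind A)
    (h_aug : ∀ ⦃A B : Finset α⦄, Ind A → Ind B → A.card < B.card →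
      ∃ e ∈ B \ A, Ind (insert e A)) : Matroid α :=
  (IndepMatroid.ofFinset univ Ind h_empty (fun _ _ hB hAB => h_down hAB hB)
    (fun _ _ hA hB hlt => by simpa [and_assoc] using h_aug hA hB hlt)
    (fun _ _ => subset_univ _)).matroid

theorem ofIndepFinset_indep [DecidableEq α] {Ind : Finset α → Prop} {h_empty h_down h_aug}
    {A : Finset α} : (ofIndepFinset Ind h_empty h_down h_aug).Indep A ↔ Ind A := by
  simp [ofIndepFinset]

end Matroid

theorem stmt_14_general {α : Type*} [DecidableEq α]
    (Ind₁ Ind₂ : Finset α → Prop)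
    (h_empty₁ : Ind₁ ∅)
    (h_down₁ : ∀ ⦃A B : Finset α⦄, A ⊆ B → Ind₁ B → Ind₁ A)
    (h_aug₁ : ∀ ⦃A B : Finset α⦄, Ind₁ A → Ind₁ B → A.card < B.card →
      ∃ e ∈ B \ A, Ind₁ (insert e A))
    (h_empty₂ : Ind₂ ∅)
    (h_down₂ : ∀ ⦃A B : Finset α⦄, A ⊆ B → Ind₂ B → Ind₂ A)
    (h_aug₂ : ∀ ⦃A B : Finset α⦄, Ind₂ A → Ind₂ B → A.card < B.card →
      ∃ e ∈ B \ A, Ind₂ (insert e A))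
    (Y P : Finset α) (hY₁ : Ind₁ Y) (hY₂ : Ind₂ Y) (hP₁ : Ind₁ P) (hP₂ : Ind₂ P) :
    ∃ X : Fin (P.card - Y.card) → Finset α,
      (∀ i, X i ⊆ Y ∪ P) ∧
      (∀ i j, i ≠ j → Disjoint (X i) (X j)) ∧
      (∀ i, Ind₁ (symmDiff Y (X i)) ∧ Ind₂ (symmDiff Y (X i)) ∧
        (symmDiff Y (X i)).card = Y.card + 1) := by
  obtain ⟨X, hXsub, hXdisj, hX⟩ := Matroid.exists_disjoint_augmentations
    (Matroid.ofIndepFinset Ind₁ h_empty₁ h_down₁ h_aug₁)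
    (Matroid.ofIndepFinset Ind₂ h_empty₂ h_down₂ h_aug₂) Y P
    (Matroid.ofIndepFinset_indep.2 hY₁) (Matroid.ofIndepFinset_indep.2 hY₂)
    (Matroid.ofIndepFinset_indep.2 hP₁) (Matroid.ofIndepFinset_indep.2 hP₂)
  exact ⟨X, hXsub, fun i j hij => hXdisj hij, fun i => by
    simpa only [Matroid.ofIndepFinset_indep] using hX i⟩

/-- Let `Ind₁, Ind₂` be the independence families of two matroids
on a common ground set and let `Y, P` be common independent sets with
`|Y| ≤ |P|`. Then there exist pairwise disjoint subsets `X 1, …, X (|P|-|Y|)` of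
`Y ∪ P` such that each `Y △ X i` is independent in both matroids and has
cardinality `|Y| + 1`. -/
theorem stmt_14 {α : Type*} [DecidableEq α]
    (Ind₁ Ind₂ : Finset α → Prop)
    (h_empty₁ : Ind₁ ∅)
    (h_down₁ : ∀ ⦃A B : Finset α⦄, A ⊆ B → Ind₁ B → Ind₁ A)
    (h_aug₁ : ∀ ⦃A B : Finset α⦄, Ind₁ A → Ind₁ B → A.card < B.card →
      ∃ e ∈ B \ A, Ind₁ (insert e A))
    (h_empty₂ : Ind₂ ∅)
    (h_down₂ : ∀ ⦃A B : Finset α⦄, A ⊆ B → Ind₂ B → Ind₂ A)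
    (h_aug₂ : ∀ ⦃A B : Finset α⦄, Ind₂ A → Ind₂ B → A.card < B.card →
      ∃ e ∈ B \ A, Ind₂ (insert e A))
    (Y P : Finset α) (hY₁ : Ind₁ Y) (hY₂ : Ind₂ Y) (hP₁ : Ind₁ P) (hP₂ : Ind₂ P)
    (hcard : Y.card ≤ P.card) :
    ∃ X : Fin (P.card - Y.card) → Finset α,
      (∀ i, X i ⊆ Y ∪ P) ∧
      (∀ i j, i ≠ j → Disjoint (X i) (X j)) ∧
      (∀ i, Ind₁ (symmDiff Y (X i)) ∧ Ind₂ (symmDiff Y (X i)) ∧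
        (symmDiff Y (X i)).card = Y.card + 1) :=
  stmt_14_general Ind₁ Ind₂ h_empty₁ h_down₁ h_aug₁ h_empty₂ h_down₂ h_aug₂ Y P hY₁ hY₂ hP₁ hP₂
end

section
/- Let M be a matroid on V, Y independent, and p₁, ..., p_t, y₁, ..., y_t elements with y_j ∈ Y and p_j ∉ Y, such that (Y \ {y_i}) ∪ {p_i} ∈ M for all i, and (Y \ {y_j}) ∪ {p_i} ∉ M for all i < j. Then Z = (Y \ {y₁,...,y_t}) ∪ {p₁,...,p_t} is independent. -/
/-- Unique-perfect-matching / chordless-path lemma: with `Y`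
independent, distinct `y 1, …, y t ∈ Y` and distinct `p 1, …, p t ∉ Y` such that
`(Y \ {y i}) ∪ {p i}` is independent for all `i` while `(Y \ {y j}) ∪ {p i}` is
dependent whenever `i < j`, the set `Z = (Y \ {y₁,…,y_t}) ∪ {p₁,…,p_t}` is
independent. -/
theorem stmt_15 {α : Type*} [DecidableEq α]
    (Ind : Finset α → Prop)
    (h_empty : Ind ∅)
    (h_down : ∀ ⦃A B : Finset α⦄, A ⊆ B → Ind B → Ind A)
    (h_aug : ∀ ⦃A B : Finset α⦄, Ind A → Ind B → A.card < B.card →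
      ∃ e ∈ B \ A, Ind (insert e A))
    (Y : Finset α) (hY : Ind Y)
    (t : ℕ) (y p : Fin t → α)
    (hy_inj : Function.Injective y) (hp_inj : Function.Injective p)
    (hyY : ∀ j, y j ∈ Y) (hpY : ∀ i, p i ∉ Y)
    (h_diag : ∀ i, Ind (insert (p i) (Y.erase (y i))))
    (h_noshort : ∀ i j, i < j → ¬ Ind (insert (p i) (Y.erase (y j)))) :
    Ind ((Y \ Finset.image y Finset.univ) ∪ Finset.image p Finset.univ) := by
  classical
  -- Build a genuine matroid from the independence predicate
  set M : Matroid α := (IndepMatroid.ofFinset (Set.univ : Set α) Ind h_empty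
    (fun I J hJ hIJ => h_down hIJ hJ)
    (fun I J hI hJ hc => by
      obtain ⟨e, he, hi⟩ := h_aug hI hJ hc
      rw [Finset.mem_sdiff] at he
      exact ⟨e, he.1, he.2, hi⟩)
    (fun I _ => Set.subset_univ _)).matroid with hMdef
  have hind : ∀ I : Finset α, M.Indep ↑I ↔ Ind I := by
    intro I
    rw [hMdef, IndepMatroid.matroid_indep_iff, IndepMatroid.ofFinset_indep]
  have hE : M.E = Set.univ := by rw [hMdef]; rfl

  -- the partial exchange sets
  set A : ℕ → Finset α := fun k =>
    ((Y \ (Finset.univ.filter (fun i : Fin t => (i : ℕ) < k)).image y) ∪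
      (Finset.univ.filter (fun i : Fin t => (i : ℕ) < k)).image p) with hA
  have key : ∀ k, k ≤ t → Ind (A k) := by
    intro k
    induction k with
    | zero =>
      intro _
      have : A 0 = Y := by
        simp [hA]
      rw [this]; exact hY
    | succ k ih =>
      intro hk1
      have hk : k < t := hk1
      have ihk := ih (le_of_lt hk)
      set i : Fin t := ⟨k, hk⟩ with hi
      have hik : (i : ℕ) = k := rfl
      -- p's distinct from y's
      have hyp_ne : ∀ (a b : Fin t), y a ≠ p b := by
        intro a b hab
        exact hpY b (hab ▸ hyY a)
      -- step set equation
      have hstep : A (k + 1) = insert (p i) ((A k).erase (y i)) := by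
        ext a
        simp only [hA, Finset.mem_union, Finset.mem_sdiff, Finset.mem_image,
          Finset.mem_filter, Finset.mem_univ, true_and, Finset.mem_insert,
          Finset.mem_erase]
        constructor
        · rintro (⟨haY, hno⟩ | ⟨j, hj, rfl⟩)
          · refine Or.inr ⟨?_, Or.inl ⟨haY, ?_⟩⟩
            · intro h; exact hno ⟨i, by omega, h.symm⟩

            · rintro ⟨j, hj, rfl⟩; exact hno ⟨j, by omega, rfl⟩
          · rcases Nat.lt_succ_iff_lt_or_eq.mp hj with h | h
            · exact Or.inr ⟨fun hh => hyp_ne i j hh.symm, Or.inr ⟨j, h, rfl⟩⟩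
            · left; congr 1; exact Fin.ext h
        · rintro (rfl | ⟨hne, ⟨haY, hno⟩ | ⟨j, hj, rfl⟩⟩)
          · exact Or.inr ⟨i, by omega, rfl⟩
          · refine Or.inl ⟨haY, ?_⟩
            rintro ⟨j, hj, rfl⟩
            rcases Nat.lt_succ_iff_lt_or_eq.mp hj with h | h
            · exact hno ⟨j, h, rfl⟩
            · exact hne (by congr 1; exact Fin.ext h)
          · exact Or.inr ⟨j, by omega, rfl⟩
      -- the closure of Y.erase (y i)
      have hYe : M.Indep ↑(Y.erase (y i)) :=
        (hind _).mpr (h_down (Finset.erase_subset _ _) hY)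
      have hpC : ∀ j : Fin t, (j : ℕ) < k → p j ∈ M.closure ↑(Y.erase (y i)) := by
        intro j hj
        have hlt : j < i := by rw [hi]; exact hj
        have hdep := h_noshort j i hlt
        have hnotmem : p j ∉ Y.erase (y i) := fun h => hpY j (Finset.mem_of_mem_erase h)
        by_contra hcl
        have : M.Indep (insert (p j) ↑(Y.erase (y i))) := by
          rw [hYe.insert_indep_iff_of_notMem (by exact_mod_cast hnotmem)]
          exact ⟨by rw [hE]; trivial, hcl⟩
        rw [← Finset.coe_insert, hind] at this
        exact hdep this
      -- the erased partial set is inside the closure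
      have hBsub : (↑((A k).erase (y i)) : Set α) ⊆ M.closure ↑(Y.erase (y i)) := by
        intro a ha
        simp only [Finset.coe_erase, Set.mem_diff, Set.mem_singleton_iff] at ha
        obtain ⟨haA, hane⟩ := ha
        rw [Finset.mem_coe, hA] at haA
        simp only [Finset.mem_union, Finset.mem_sdiff, Finset.mem_image,
          Finset.mem_filter, Finset.mem_univ, true_and] at haA
        rcases haA with ⟨haY, _⟩ | ⟨j, hj, rfl⟩
        · exact M.subset_closure _ (by rw [hE]; exact Set.subset_univ _)
            (by exact_mod_cast Finset.mem_erase.mpr ⟨hane, haY⟩)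
        · exact hpC j hj
      have hBi : M.Indep ↑((A k).erase (y i)) :=
        (hind _).mpr (h_down (Finset.erase_subset _ _) ihk)
      have hclsub : M.closure ↑((A k).erase (y i)) ⊆ M.closure ↑(Y.erase (y i)) := by
        have := M.closure_subset_closure hBsub
        rwa [M.closure_closure] at this
      -- p i is not in that closure
      have hpi_not : p i ∉ M.closure ↑(Y.erase (y i)) := by
        have hdiag := (hind _).mpr (h_diag i)
        rw [Finset.coe_insert] at hdiag
        have hnotmem : p i ∉ Y.erase (y i) := fun h => hpY i (Finset.mem_of_mem_erase h)
        rw [hYe.insert_indep_iff_of_notMem (by exact_mod_cast hnotmem)] at hdiag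
        exact hdiag.2
      -- p i is not in the erased partial set
      have hpi_notmem : p i ∉ (A k).erase (y i) := by
        intro h
        have := Finset.mem_of_mem_erase h
        rw [hA] at this
        simp only [Finset.mem_union, Finset.mem_sdiff, Finset.mem_image,
          Finset.mem_filter, Finset.mem_univ, true_and] at this
        rcases this with ⟨hmem, _⟩ | ⟨j, hj, hje⟩
        · exact hpY i hmem
        · have hji : (j : ℕ) = (i : ℕ) := by rw [hp_inj hje]
          omega
      -- conclude
      have : M.Indep (insert (p i) ↑((A k).erase (y i))) := by
        rw [hBi.insert_indep_iff_of_notMem (by exact_mod_cast hpi_notmem)]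
        exact ⟨by rw [hE]; trivial, fun h => hpi_not (hclsub h)⟩
      rw [← Finset.coe_insert, hind] at this
      rw [hstep]
      exact this
  have hfin : A t = (Y \ Finset.image y Finset.univ) ∪ Finset.image p Finset.univ := by
    have : (Finset.univ.filter (fun i : Fin t => (i : ℕ) < t)) = Finset.univ := by
      ext j; simp [j.isLt]
    rw [hA]; simp only [this]
  rw [← hfin]
  exact key t le_rfl
end

section
/- Let M be a matroid on V, let Y ∪ {p₁,...,p_t} have rank |Y| (i.e., Y ∪ {p_i} is dependent for each i after spanning considerations), let Z = (Y \ {y₁,...,y_t}) ∪ {p₁,...,p_t} be independent with |Z| = |Y|, and let p be an element with Y ∪ {p} independent and p ∉ Y ∪ {p₁,...,p_t}. Then Z ∪ {p} is independent. -/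
/-- Let `Y` be independent, `ys ⊆ Y`, `Ps` disjoint from `Y`,
suppose `Y ∪ Ps` has rank `|Y|` (every independent subset of `Y ∪ Ps` has size at
most `|Y|`), let `Z = (Y \ ys) ∪ Ps` be independent with `|Z| = |Y|`, and let `p`
be an element with `Y ∪ {p}` independent and `p ∉ Y ∪ Ps`. Then `Z ∪ {p}` is
independent. -/
theorem stmt_16 {α : Type*} [DecidableEq α]
    (Ind : Finset α → Prop)
    (h_empty : Ind ∅)
    (h_down : ∀ ⦃A B : Finset α⦄, A ⊆ B → Ind B → Ind A)
    (h_aug : ∀ ⦃A B : Finset α⦄, Ind A → Ind B → A.card < B.card →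
      ∃ e ∈ B \ A, Ind (insert e A))
    (Y ys Ps : Finset α) (hY : Ind Y)
    (hys : ys ⊆ Y) (hPs : Disjoint Ps Y)
    (h_rank : ∀ J : Finset α, J ⊆ Y ∪ Ps → Ind J → J.card ≤ Y.card)
    (hZ : Ind ((Y \ ys) ∪ Ps)) (hZcard : ((Y \ ys) ∪ Ps).card = Y.card)
    (p : α) (hp : p ∉ Y ∪ Ps) (hYp : Ind (insert p Y)) :
    Ind (insert p ((Y \ ys) ∪ Ps)) := by
  set Z := (Y \ ys) ∪ Ps with hZdef
  have hcard : Z.card < (insert p Y).card := by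
    rw [Finset.card_insert_of_notMem (fun h => hp (Finset.mem_union_left _ h)), hZcard]
    omega
  obtain ⟨e, he, hei⟩ := h_aug hZ hYp hcard
  rw [Finset.mem_sdiff, Finset.mem_insert] at he
  rcases he.1 with rfl | heY
  · exact hei
  · exfalso
    have hsub : insert e Z ⊆ Y ∪ Ps := by
      intro x hx
      rcases Finset.mem_insert.mp hx with rfl | hx
      · exact Finset.mem_union_left _ heY
      · rcases Finset.mem_union.mp hx with h | h
        · exact Finset.mem_union_left _ (Finset.mem_sdiff.mp h).1
        · exact Finset.mem_union_right _ h
    have := h_rank _ hsub hei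
    rw [Finset.card_insert_of_notMem he.2, hZcard] at this
    omega
end
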